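/- arXiv:0806.1255 — 2 statements merged into one kernel-verified Lean document; each statement's English description precedes it below -/
import Mathlib

section
/- Let 0 ≤ k ≤ n−1 and let σ : {0,…,k} → {0,…,n} be increasing. Then for every x ∈ ℝⁿ and all v_1,…,v_k ∈ ℝⁿ: (dλ_{σ(0)} ∧ ⋯ ∧ dλ_{σ(k)})(x, v_1,…,v_k) = φ_σ(x)(v_1,…,v_k) − φ_σ(0)(v_1,…,v_k), where in the left-hand side x is inserted as the first argument of the (k+1)-form (the Koszul operator) and φ_σ(0) denotes the value of the Whitney form φ_σ at the origin 0 ∈ ℝⁿ. In other words, κ(dλ_{σ(0)} ∧ ⋯ ∧ dλ_{σ(k)}) = φ_σ − φ_σ(0). -/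
open scoped BigOperators

noncomputable section

/-- The wedge product of `k` linear functionals on `ℝⁿ`:
`(wedge f) v = det (matrix whose (j,i) entry is f i (v j))`. -/
def wedge {n k : ℕ} (f : Fin k → ((Fin n → ℝ) →ₗ[ℝ] ℝ)) :
    (Fin n → ℝ) [⋀^Fin k]→ₗ[ℝ] ℝ :=
  (Matrix.detRowAlternating : (Fin k → ℝ) [⋀^Fin k]→ₗ[ℝ] ℝ).compLinearMap
    (LinearMap.pi f)

/-- The wedge product of a linear functional (a `1`-form) with an alternating `k`-form on `ℝⁿ`. -/
def oneWedge {n k : ℕ} (f : (Fin n → ℝ) →ₗ[ℝ] ℝ)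
    (η : (Fin n → ℝ) [⋀^Fin k]→ₗ[ℝ] ℝ) :
    (Fin n → ℝ) [⋀^Fin (k + 1)]→ₗ[ℝ] ℝ :=
  ((TensorProduct.lid ℝ ℝ).toLinearMap.compAlternatingMap
    (AlternatingMap.domCoprod
      ((AlternatingMap.ofSubsingleton ℝ (Fin n → ℝ) ℝ (0 : Fin 1)) f) η)).domDomCongr
    (finSumFinEquiv.trans (finCongr (Nat.add_comm 1 k)))

/-- A nondegenerate simplex in `ℝⁿ` with vertices `x 0, …, x n`, together with its barycentric
coordinate functions `λ_i = dlam i + c i`: the unique affine functions with `λ_i (x j) = δ_{ij}`,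
`dlam i` being the linear part `dλ_i`. -/
structure Simplex (n : ℕ) where
  x : Fin (n + 1) → (Fin n → ℝ)
  affineIndep : AffineIndependent ℝ x
  dlam : Fin (n + 1) → ((Fin n → ℝ) →ₗ[ℝ] ℝ)
  c : Fin (n + 1) → ℝ
  lam_vertex : ∀ i j, dlam i (x j) + c i = if i = j then 1 else 0

namespace Simplex

variable {n : ℕ} (B : Simplex n)

/-- The barycentric coordinate function `λ_i`. -/
def lam (i : Fin (n + 1)) (y : Fin n → ℝ) : ℝ := B.dlam i y + B.c i

/-- The barycentric monomial `λ^α = λ_0^{α_0} ⋯ λ_n^{α_n}`. -/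
def lamPow (α : Fin (n + 1) → ℕ) (y : Fin n → ℝ) : ℝ := ∏ i, (B.lam i y) ^ (α i)

/-- `dλ_σ = dλ_{σ 0} ∧ ⋯ ∧ dλ_{σ (k-1)}`. -/
def dlamWedge {k : ℕ} (σ : Fin k → Fin (n + 1)) : (Fin n → ℝ) [⋀^Fin k]→ₗ[ℝ] ℝ :=
  wedge fun j => B.dlam (σ j)

/-- The Whitney form `φ_σ = Σ_i (-1)^i λ_{σ i} dλ_{σ 0} ∧ ⋯ ∧ (omit dλ_{σ i}) ∧ ⋯ ∧ dλ_{σ k}`. -/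
def whitney {k : ℕ} (σ : Fin (k + 1) → Fin (n + 1)) (y : Fin n → ℝ) :
    (Fin n → ℝ) [⋀^Fin k]→ₗ[ℝ] ℝ :=
  ∑ i : Fin (k + 1), ((-1 : ℝ) ^ (i : ℕ) * B.lam (σ i) y) •
    wedge fun j : Fin k => B.dlam (σ (i.succAbove j))

/-- The tangent space `T_S = ∩_{i ∉ S} ker dλ_i` of the face `f_S`. -/
def tangent (S : Finset (Fin (n + 1))) : Set (Fin n → ℝ) :=
  {v | ∀ i ∉ S, B.dlam i v = 0}

/-- `ψ^{α,S}_i = dλ_i - (α_i / r) Σ_{j ∈ S} dλ_j`. -/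
def psi (α : Fin (n + 1) → ℕ) (r : ℕ) (S : Finset (Fin (n + 1))) (i : Fin (n + 1)) :
    (Fin n → ℝ) →ₗ[ℝ] ℝ :=
  B.dlam i - ((α i : ℝ) / (r : ℝ)) • ∑ j ∈ S, B.dlam j

/-- `ψ^{α,S}_σ = ψ^{α,S}_{σ 1} ∧ ⋯ ∧ ψ^{α,S}_{σ k}`. -/
def psiWedge {k : ℕ} (α : Fin (n + 1) → ℕ) (r : ℕ) (S : Finset (Fin (n + 1)))
    (σ : Fin k → Fin (n + 1)) : (Fin n → ℝ) [⋀^Fin k]→ₗ[ℝ] ℝ :=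
  wedge fun j => B.psi α r S (σ j)

/-- The list of direction vectors `x_j - x_l`, with `x_j - x_l` repeated `α j` times. -/
def dirList (α : Fin (n + 1) → ℕ) (l : Fin (n + 1)) : List (Fin n → ℝ) :=
  (List.finRange (n + 1)).flatMap fun j => List.replicate (α j) (B.x j - B.x l)

end Simplex

/-- The support `⟦α⟧` of a multi-index. -/
def suppF {n : ℕ} (α : Fin (n + 1) → ℕ) : Finset (Fin (n + 1)) :=
  Finset.univ.filter fun i => α i ≠ 0

/-- The range `⟦σ⟧` of an (increasing) map, as a finset. -/
def rangeF {n k : ℕ} (σ : Fin k → Fin (n + 1)) : Finset (Fin (n + 1)) :=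
  Finset.image σ Finset.univ

/-- `f : ℝⁿ → ℝ` is a polynomial function of (total) degree at most `r`. -/
def IsPolyDeg {n : ℕ} (r : ℕ) (f : (Fin n → ℝ) → ℝ) : Prop :=
  ∃ p : MvPolynomial (Fin n) ℝ, p.totalDegree ≤ r ∧ ∀ y, MvPolynomial.eval y p = f y

/-- `P_r`: the space of polynomial functions on `ℝⁿ` of degree at most `r`. -/
def Pscalar (n r : ℕ) : Submodule ℝ ((Fin n → ℝ) → ℝ) where
  carrier := {f | IsPolyDeg r f}
  add_mem' := by
    rintro f g ⟨p, hp, hpe⟩ ⟨q, hq, hqe⟩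
    exact ⟨p + q, le_trans (MvPolynomial.totalDegree_add p q) (max_le hp hq),
      fun y => by simp [hpe y, hqe y]⟩
  zero_mem' := ⟨0, by simp, fun y => by simp⟩
  smul_mem' := by
    rintro a f ⟨p, hp, hpe⟩
    exact ⟨a • p, le_trans (MvPolynomial.totalDegree_smul_le a p) hp,
      fun y => by simp [MvPolynomial.smul_eq_C_mul, hpe y]⟩

/-- `P_r Λ^k`: the space of polynomial differential `k`-forms of degree at most `r` on `ℝⁿ`. -/
def PLambda (n r k : ℕ) :
    Submodule ℝ ((Fin n → ℝ) → ((Fin n → ℝ) [⋀^Fin k]→ₗ[ℝ] ℝ)) where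
  carrier := {ω | ∀ v : Fin k → (Fin n → ℝ), IsPolyDeg r fun y => ω y v}
  add_mem' := by
    intro ω η hω hη v
    exact (Pscalar n r).add_mem (hω v) (hη v)
  zero_mem' := fun v => (Pscalar n r).zero_mem
  smul_mem' := by
    intro a ω hω v
    exact (Pscalar n r).smul_mem a (hω v)

/-- The Koszul operator `κ`, contracting a `(k+1)`-form field with the position vector. -/
def koszulHom (n k : ℕ) :
    ((Fin n → ℝ) → ((Fin n → ℝ) [⋀^Fin (k + 1)]→ₗ[ℝ] ℝ)) →ₗ[ℝ]
      ((Fin n → ℝ) → ((Fin n → ℝ) [⋀^Fin k]→ₗ[ℝ] ℝ)) where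
  toFun ω := fun y => (ω y).curryLeft y
  map_add' ω η := by funext y; simp
  map_smul' a ω := by funext y; simp

/-- `P⁻_r Λ^k = P_{r-1} Λ^k + κ (P_{r-1} Λ^{k+1})`. -/
def PminusLambda (n r k : ℕ) :
    Submodule ℝ ((Fin n → ℝ) → ((Fin n → ℝ) [⋀^Fin k]→ₗ[ℝ] ℝ)) :=
  PLambda n (r - 1) k ⊔ Submodule.map (koszulHom n k) (PLambda n (r - 1) (k + 1))

/-- `ω` has vanishing trace on the face `f_S`. -/
def VanishTrace {n k : ℕ} (B : Simplex n) (S : Finset (Fin (n + 1)))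
    (ω : (Fin n → ℝ) → ((Fin n → ℝ) [⋀^Fin k]→ₗ[ℝ] ℝ)) : Prop :=
  ∀ y : Fin n → ℝ, (∀ i ∉ S, B.lam i y = 0) →
    ∀ v : Fin k → (Fin n → ℝ), (∀ j, v j ∈ B.tangent S) → ω y v = 0

/-- Forms having vanishing trace on every face `f_S` with `|S| = n`
(the codimension-one faces). -/
def traceZeroSub {n : ℕ} (B : Simplex n) (k : ℕ) :
    Submodule ℝ ((Fin n → ℝ) → ((Fin n → ℝ) [⋀^Fin k]→ₗ[ℝ] ℝ)) where
  carrier := {ω | ∀ S : Finset (Fin (n + 1)), S.card = n → VanishTrace B S ω}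
  add_mem' := by
    intro ω η hω hη S hS y hy v hv
    simp only [Pi.add_apply, AlternatingMap.add_apply, hω S hS y hy v hv,
      hη S hS y hy v hv, add_zero]
  zero_mem' := by intro S hS y hy v hv; simp
  smul_mem' := by
    intro a ω hω S hS y hy v hv
    simp only [Pi.smul_apply, AlternatingMap.smul_apply, hω S hS y hy v hv, smul_zero]

/-- `P̊_r Λ^k`: polynomial forms with vanishing trace on the boundary. -/
def PLambdaZero {n : ℕ} (B : Simplex n) (r k : ℕ) :
    Submodule ℝ ((Fin n → ℝ) → ((Fin n → ℝ) [⋀^Fin k]→ₗ[ℝ] ℝ)) :=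
  PLambda n r k ⊓ traceZeroSub B k

/-- `P̊⁻_r Λ^k`: forms in `P⁻_r Λ^k` with vanishing trace on the boundary. -/
def PminusLambdaZero {n : ℕ} (B : Simplex n) (r k : ℕ) :
    Submodule ℝ ((Fin n → ℝ) → ((Fin n → ℝ) [⋀^Fin k]→ₗ[ℝ] ℝ)) :=
  PminusLambda n r k ⊓ traceZeroSub B k

/-- `f` vanishes to order `r` at `y`: all partial derivatives of order `< r` vanish at `y`. -/
def VanishOrder {n : ℕ} (r : ℕ) (f : (Fin n → ℝ) → ℝ) (y : Fin n → ℝ) : Prop :=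
  ∀ m : ℕ, m < r → iteratedFDeriv ℝ m f y = 0

/-- Iterated directional derivatives along a list of directions. -/
def dirDerivList {n : ℕ} : List (Fin n → ℝ) → ((Fin n → ℝ) → ℝ) → ((Fin n → ℝ) → ℝ)
  | [], f => f
  | t :: ts, f => dirDerivList ts fun y => fderiv ℝ f y t

theorem AlternatingMap.sum_apply {R M N ι α : Type*} [Semiring R] [AddCommMonoid M]
    [Module R M] [AddCommMonoid N] [Module R N] (s : Finset α) (f : α → M [⋀^ι]→ₗ[R] N)
    (v : ι → M) : (∑ a ∈ s, f a) v = ∑ a ∈ s, f a v := by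
  classical
  induction s using Finset.induction_on with
  | empty => rfl
  | insert a s ha ih => simp [Finset.sum_insert ha, ih]

theorem wedge_apply {n k : ℕ} (f : Fin k → ((Fin n → ℝ) →ₗ[ℝ] ℝ)) (v : Fin k → (Fin n → ℝ)) :
    wedge f v = (Matrix.of fun j i => f i (v j)).det :=
  rfl

theorem wedge_cons_apply {n k : ℕ} (f : Fin (k + 1) → ((Fin n → ℝ) →ₗ[ℝ] ℝ)) (y : Fin n → ℝ)
    (v : Fin k → (Fin n → ℝ)) :
    wedge f (Fin.cons y v) =
      ∑ i : Fin (k + 1), (-1 : ℝ) ^ (i : ℕ) * f i y * wedge (fun j => f (i.succAbove j)) v := by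
  rw [wedge_apply, Matrix.det_succ_row_zero]
  rfl

namespace Simplex

variable {n : ℕ} (B : Simplex n)

theorem lam_sub_lam_zero (i : Fin (n + 1)) (y : Fin n → ℝ) :
    B.lam i y - B.lam i 0 = B.dlam i y := by
  simp [lam]

theorem whitney_apply {k : ℕ} (σ : Fin (k + 1) → Fin (n + 1)) (y : Fin n → ℝ)
    (v : Fin k → (Fin n → ℝ)) :
    B.whitney σ y v = ∑ i : Fin (k + 1),
      (-1 : ℝ) ^ (i : ℕ) * B.lam (σ i) y * wedge (fun j => B.dlam (σ (i.succAbove j))) v := by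
  simp [whitney, AlternatingMap.sum_apply]

end Simplex

theorem stmt17_general {n k : ℕ} (B : Simplex n)
    (σ : Fin (k + 1) → Fin (n + 1)) :
    ∀ (y : Fin n → ℝ) (v : Fin k → (Fin n → ℝ)),
      B.dlamWedge σ (Fin.cons y v) = B.whitney σ y v - B.whitney σ 0 v := by
  intro y v
  simp only [Simplex.dlamWedge, wedge_cons_apply, Simplex.whitney_apply,
    ← Finset.sum_sub_distrib, ← sub_mul, ← mul_sub, B.lam_sub_lam_zero]

/-- `κ (dλ_{σ(0)} ∧ ⋯ ∧ dλ_{σ(k)}) = φ_σ - φ_σ(0)`. -/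
theorem stmt17 {n k : ℕ} (hn : 1 ≤ n) (B : Simplex n) (hk : k + 1 ≤ n)
    (σ : Fin (k + 1) → Fin (n + 1)) (hσ : StrictMono σ) :
    ∀ (y : Fin n → ℝ) (v : Fin k → (Fin n → ℝ)),
      B.dlamWedge σ (Fin.cons y v) = B.whitney σ y v - B.whitney σ 0 v :=
  stmt17_general B σ
end
end

section
/- Let 0 ≤ k ≤ n and let S ⊆ {0,…,n} with |S| ≥ k+1. Let α ∈ ℕ^{n+1} be any multi-index and σ : {1,…,k} → {0,…,n} increasing. Then the trace of λ^α dλ_σ on the face f_S vanishes — i.e., λ^α(x)·dλ_σ(v_1,…,v_k) = 0 for every x with λ_i(x) = 0 for all i ∉ S and all v_1,…,v_k ∈ T_S — if and only if ⟦α,σ⟧ is not contained in S. In particular, λ^α dλ_σ has vanishing trace on every face f_S with |S| = n if and only if ⟦α,σ⟧ = {0,…,n}. -/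
open scoped BigOperators

noncomputable section

/-!
If some index of `⟦α,σ⟧` lies outside `S`, then either a factor `λ_i` of `λ^α` vanishes on the
face `f_S`, or some `dλ_{σ m}` vanishes on its tangent space `T_S`; either way the trace is zero.
Conversely, if `⟦α,σ⟧ ⊆ S`, then `λ^α` is nonzero at the barycenter of `f_S`, and since
`|S| ≥ k + 1` there is an `l ∈ S` outside the range of `σ`; the edge vectors `x_{σ j} - x_l` lie in
`T_S` and `dλ_σ` evaluates to `det 1 = 1` on them.
-/

open Finset

lemma Finset.forall_card_eq_not_subset_iff {ι : Type*} [Fintype ι] [DecidableEq ι] {m : ℕ}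
    (hι : Fintype.card ι = m + 1) (T : Finset ι) :
    (∀ S : Finset ι, S.card = m → ¬ T ⊆ S) ↔ T = univ := by
  constructor
  · intro h
    by_contra hT
    have hTm : T.card ≤ m := by have := (card_lt_iff_ne_univ T).mpr hT; omega
    obtain ⟨S, hTS, hSm⟩ := exists_superset_card_eq hTm (by simp [hι])
    exact h S hSm hTS
  · rintro rfl S hSm hS
    have := card_le_card hS
    rw [card_univ] at this
    omega

namespace Simplex

variable {n : ℕ} (B : Simplex n)

lemma dlam_x (i j : Fin (n + 1)) :
    B.dlam i (B.x j) = (if i = j then 1 else 0) - B.c i := by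
  linarith [B.lam_vertex i j]

lemma dlam_x_sub_x (i a b : Fin (n + 1)) :
    B.dlam i (B.x a - B.x b) = (if i = a then 1 else 0) - (if i = b then 1 else 0) := by
  rw [map_sub, dlam_x, dlam_x]
  ring

lemma lam_sum_smul_x {S : Finset (Fin (n + 1))} {w : Fin (n + 1) → ℝ}
    (hw : ∑ j ∈ S, w j = 1) (i : Fin (n + 1)) :
    B.lam i (∑ j ∈ S, w j • B.x j) = if i ∈ S then w i else 0 := by
  simp only [lam, map_sum, map_smul, dlam_x, smul_eq_mul, mul_sub, sum_sub_distrib,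
    ← sum_mul, hw, mul_ite, mul_one, mul_zero, sum_ite_eq]
  ring

lemma sub_mem_tangent {S : Finset (Fin (n + 1))} {a b : Fin (n + 1)} (ha : a ∈ S)
    (hb : b ∈ S) : B.x a - B.x b ∈ B.tangent S := by
  intro i hi
  rw [dlam_x_sub_x, if_neg (ne_of_mem_of_not_mem ha hi).symm,
    if_neg (ne_of_mem_of_not_mem hb hi).symm, sub_zero]

lemma lamPow_eq_zero {α : Fin (n + 1) → ℕ} {y : Fin n → ℝ} {i : Fin (n + 1)}
    (hα : α i ≠ 0) (hy : B.lam i y = 0) : B.lamPow α y = 0 :=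
  prod_eq_zero (mem_univ i) (by rw [hy, zero_pow hα])

lemma dlamWedge_eq_zero {k : ℕ} {σ : Fin k → Fin (n + 1)} {v : Fin k → Fin n → ℝ}
    {m : Fin k} (hv : ∀ j, B.dlam (σ m) (v j) = 0) : B.dlamWedge σ v = 0 :=
  Matrix.det_eq_zero_of_column_eq_zero m hv

lemma dlamWedge_x_sub_x {k : ℕ} {σ : Fin k → Fin (n + 1)} (hσ : Function.Injective σ)
    {l : Fin (n + 1)} (hl : ∀ m, σ m ≠ l) :
    B.dlamWedge σ (fun j => B.x (σ j) - B.x l) = 1 := by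
  change Matrix.det (Matrix.of fun j m => B.dlam (σ m) (B.x (σ j) - B.x l)) = 1
  convert Matrix.det_one (n := Fin k) (R := ℝ) using 2
  ext j m
  rw [Matrix.of_apply, dlam_x_sub_x, if_neg (hl m), sub_zero]
  simp only [hσ.eq_iff, Matrix.one_apply, eq_comm]

end Simplex

section

variable {n k : ℕ} (B : Simplex n) {S : Finset (Fin (n + 1))} (α : Fin (n + 1) → ℕ)
  {σ : Fin k → Fin (n + 1)}

lemma vanishTrace_lamPow_smul_dlamWedge_of_not_subset (h : ¬ suppF α ∪ rangeF σ ⊆ S) :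
    VanishTrace B S (fun y => B.lamPow α y • B.dlamWedge σ) := by
  intro y hy v hv
  obtain ⟨i, hi, hiS⟩ := not_subset.mp h
  rw [AlternatingMap.smul_apply, smul_eq_mul]
  rcases mem_union.mp hi with hα | hσi
  · rw [B.lamPow_eq_zero (mem_filter.mp hα).2 (hy i hiS), zero_mul]
  · obtain ⟨m, -, rfl⟩ := mem_image.mp hσi
    rw [B.dlamWedge_eq_zero fun j => hv j _ hiS, mul_zero]

lemma not_vanishTrace_lamPow_smul_dlamWedge_of_subset (hcard : k + 1 ≤ S.card)
    (hσ : Function.Injective σ) (h : suppF α ∪ rangeF σ ⊆ S) :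
    ¬ VanishTrace B S (fun y => B.lamPow α y • B.dlamWedge σ) := by
  intro hvan
  have hS : (0 : ℝ) < S.card := by exact_mod_cast (k.succ_pos.trans_le hcard)
  set y := ∑ j ∈ S, (S.card : ℝ)⁻¹ • B.x j
  have hlam (i : Fin (n + 1)) : B.lam i y = if i ∈ S then (S.card : ℝ)⁻¹ else 0 :=
    B.lam_sum_smul_x (by simp [hS.ne']) i
  have hpow : B.lamPow α y ≠ 0 := by
    refine prod_ne_zero_iff.mpr fun i _ => ?_
    by_cases hα : α i = 0
    · simp [hα]
    · rw [hlam, if_pos (h (mem_union_left _ (by simpa [suppF] using hα)))]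
      exact pow_ne_zero _ (inv_ne_zero hS.ne')
  obtain ⟨l, hlS, hlσ⟩ : ∃ l ∈ S, l ∉ rangeF σ := by
    refine not_subset.mp fun hSσ => ?_
    have := card_le_card hSσ
    rw [rangeF, card_image_of_injective _ hσ, card_univ, Fintype.card_fin] at this
    omega
  have hσS (j : Fin k) : σ j ∈ S := h (mem_union_right _ (mem_image_of_mem σ (mem_univ j)))
  have := hvan y (fun i hi => by rw [hlam, if_neg hi])
    (fun j => B.x (σ j) - B.x l) (fun j => B.sub_mem_tangent (hσS j) hlS)
  rw [AlternatingMap.smul_apply,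
    B.dlamWedge_x_sub_x hσ fun m hm => hlσ (mem_image.mpr ⟨m, mem_univ m, hm⟩),
    smul_eq_mul, mul_one] at this
  exact hpow this

lemma vanishTrace_lamPow_smul_dlamWedge_iff (hcard : k + 1 ≤ S.card)
    (hσ : Function.Injective σ) :
    VanishTrace B S (fun y => B.lamPow α y • B.dlamWedge σ) ↔ ¬ suppF α ∪ rangeF σ ⊆ S :=
  ⟨fun hvan h => not_vanishTrace_lamPow_smul_dlamWedge_of_subset B α hcard hσ h hvan,
    vanishTrace_lamPow_smul_dlamWedge_of_not_subset B α⟩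

end

theorem stmt19_general {n k : ℕ} (B : Simplex n)
    (S : Finset (Fin (n + 1))) (hcard : k + 1 ≤ S.card)
    (α : Fin (n + 1) → ℕ) (σ : Fin k → Fin (n + 1)) (hσ : StrictMono σ) :
    (VanishTrace B S (fun y => B.lamPow α y • B.dlamWedge σ) ↔
      ¬ suppF α ∪ rangeF σ ⊆ S)
    ∧ (k + 1 ≤ n →
        ((∀ S' : Finset (Fin (n + 1)), S'.card = n →
            VanishTrace B S' (fun y => B.lamPow α y • B.dlamWedge σ)) ↔
          suppF α ∪ rangeF σ = Finset.univ)) := by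
  refine ⟨vanishTrace_lamPow_smul_dlamWedge_iff B α hcard hσ.injective, fun hkn => ?_⟩
  rw [← Finset.forall_card_eq_not_subset_iff (Fintype.card_fin _)]
  exact forall_congr' fun S' => forall_congr' fun hS' =>
    vanishTrace_lamPow_smul_dlamWedge_iff B α (hkn.trans hS'.ge) hσ.injective

/-- for `|S| ≥ k+1`, the trace of `λ^α dλ_σ` on `f_S` vanishes iff
`⟦α,σ⟧ ⊄ S`; in particular (for faces with `|S| = n`, which satisfy `|S| ≥ k+1` when
`k+1 ≤ n`), `λ^α dλ_σ` has vanishing trace on every face `f_S` with `|S| = n` iff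
`⟦α,σ⟧ = {0,…,n}`. -/
theorem stmt19 {n k : ℕ} (hn : 1 ≤ n) (B : Simplex n) (hk : k ≤ n)
    (S : Finset (Fin (n + 1))) (hcard : k + 1 ≤ S.card)
    (α : Fin (n + 1) → ℕ) (σ : Fin k → Fin (n + 1)) (hσ : StrictMono σ) :
    (VanishTrace B S (fun y => B.lamPow α y • B.dlamWedge σ) ↔
      ¬ suppF α ∪ rangeF σ ⊆ S)
    ∧ (k + 1 ≤ n →
        ((∀ S' : Finset (Fin (n + 1)), S'.card = n →
            VanishTrace B S' (fun y => B.lamPow α y • B.dlamWedge σ)) ↔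
          suppF α ∪ rangeF σ = Finset.univ)) :=
  stmt19_general B S hcard α σ hσ
end
end
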